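/- arXiv:1609.07791 — 4 statements merged into one kernel-verified Lean document; each statement's English description precedes it below -/
import Mathlib

section
/- Let f₁,…,fₙ be linearly independent linear functionals on a locally convex topological vector space E. Let k be the dimension of the subspace G of ℂⁿ consisting of those vectors (c₁,…,cₙ) such that ∑ᵢ cᵢ fᵢ is continuous. Then the codimension in E of the closure of ker(f₁,…,fₙ) = ⋂ᵢ ker fᵢ equals k. -/
/-!
The functionals vanishing on `N = ⋂ ker fᵢ` are exactly the combinations `∑ cᵢ fᵢ`, with unique
coefficients by independence. As `N` has finite codimension, such a functional is continuous iff
its kernel is closed iff it vanishes on the closure `C` of `N`. Hence `G` is isomorphic to the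
annihilator of `C`, i.e. to the dual of the finite-dimensional space `E ⧸ C`.
-/

open Module Submodule

theorem Submodule.finrank_comap_eq_of_le_range {R M M₂ : Type*} [Ring R] [AddCommGroup M]
    [Module R M] [AddCommGroup M₂] [Module R M₂] {L : M →ₗ[R] M₂} (hL : Function.Injective L)
    {W : Submodule R M₂} (hW : W ≤ LinearMap.range L) :
    finrank R (W.comap L) = finrank R W := by
  rw [(equivMapOfInjective L hL _).finrank_eq, map_comap_eq_of_le hW]

section Dual

variable {K V : Type*} [Field K] [AddCommGroup V] [Module K V]

theorem Subspace.finrank_dualAnnihilator_eq_finrank_quotient (W : Subspace K V) :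
    finrank K W.dualAnnihilator = finrank K (V ⧸ W) := by
  rw [← W.dualQuotEquivDualAnnihilator.finrank_eq, Subspace.dual_finrank_eq]

theorem Submodule.dualAnnihilator_iInf_ker_eq_span {ι : Type*} [Finite ι] (f : ι → Dual K V) :
    (⨅ i, LinearMap.ker (f i)).dualAnnihilator = span K (Set.range f) := by
  refine le_antisymm (fun φ hφ ↦ mem_span_of_iInf_ker_le_ker ?_) (span_le.2 ?_)
  · exact fun x hx ↦ (mem_dualAnnihilator φ).1 hφ x hx
  · rintro _ ⟨i, rfl⟩
    exact (mem_dualAnnihilator _).2 fun x hx ↦ (mem_iInf _).1 hx i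

theorem Submodule.finrank_comap_linearCombination_dualAnnihilator {ι : Type*} [Fintype ι]
    {f : ι → Dual K V} (hf : LinearIndependent K f) {W : Subspace K V}
    (hW : ⨅ i, LinearMap.ker (f i) ≤ W) :
    finrank K (W.dualAnnihilator.comap (Fintype.linearCombination K f)) = finrank K (V ⧸ W) := by
  refine (finrank_comap_eq_of_le_range hf.fintypeLinearCombination_injective ?_).trans
    W.finrank_dualAnnihilator_eq_finrank_quotient
  rw [Fintype.range_linearCombination, ← dualAnnihilator_iInf_ker_eq_span]
  exact dualAnnihilator_anti hW

end Dual

section Topology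

variable {𝕜 E : Type*} [NontriviallyNormedField 𝕜] [CompleteSpace 𝕜] [AddCommGroup E]
  [Module 𝕜 E] [TopologicalSpace E] [IsTopologicalAddGroup E] [ContinuousSMul 𝕜 E]

theorem LinearMap.continuous_iff_topologicalClosure_le_ker (N : Submodule 𝕜 E) [N.CoFG]
    {φ : E →ₗ[𝕜] 𝕜} (hφ : N ≤ ker φ) : Continuous φ ↔ N.topologicalClosure ≤ ker φ := by
  rw [φ.continuous_iff_isClosed_ker]
  exact ⟨N.topologicalClosure_minimal hφ,
    isClosed_mono_of_finiteDimensional_quotient N.isClosed_topologicalClosure⟩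

theorem Submodule.mem_comap_linearCombination_dualAnnihilator_topologicalClosure {ι : Type*}
    [Fintype ι] (f : ι → Dual 𝕜 E) (c : ι → 𝕜) :
    c ∈ (⨅ i, LinearMap.ker (f i)).topologicalClosure.dualAnnihilator.comap
        (Fintype.linearCombination 𝕜 f) ↔
      Continuous (Fintype.linearCombination 𝕜 f c) := by
  have : (⨅ i, LinearMap.ker (f i)).CoFG := LinearMap.ker_pi f ▸ CoFG.ker (LinearMap.pi f)
  have hN : Fintype.linearCombination 𝕜 f c ∈ (⨅ i, LinearMap.ker (f i)).dualAnnihilator := by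
    rw [dualAnnihilator_iInf_ker_eq_span, ← Fintype.range_linearCombination]
    exact LinearMap.mem_range_self _ c
  rw [mem_comap,
    LinearMap.continuous_iff_topologicalClosure_le_ker _ ((mem_dualAnnihilator _).1 hN)]
  exact mem_dualAnnihilator _

end Topology

theorem codim_closure_inter_ker_eq_dim_continuous_combinations_general
    {E : Type*} [AddCommGroup E] [Module ℂ E] [TopologicalSpace E]
    [IsTopologicalAddGroup E] [ContinuousSMul ℂ E]
    (n : ℕ) (f : Fin n → (E →ₗ[ℂ] ℂ)) (hf : LinearIndependent ℂ f)
    (G : Submodule ℂ (Fin n → ℂ))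
    (hG : ∀ c : Fin n → ℂ, c ∈ G ↔ Continuous (fun x => ∑ i, c i * f i x))
    (k : ℕ) (hk : Module.finrank ℂ G = k) :
    Module.finrank ℂ
      (E ⧸ (⨅ i, LinearMap.ker (f i)).topologicalClosure) = k := by
  have hG' : G = (⨅ i, LinearMap.ker (f i)).topologicalClosure.dualAnnihilator.comap
      (Fintype.linearCombination ℂ f) := by
    ext c
    rw [hG, mem_comap_linearCombination_dualAnnihilator_topologicalClosure]
    refine Iff.of_eq (congrArg Continuous (funext fun x ↦ ?_))
    simp [Fintype.linearCombination_apply]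
  rw [← hk, hG', finrank_comap_linearCombination_dualAnnihilator hf (le_topologicalClosure _)]

theorem codim_closure_inter_ker_eq_dim_continuous_combinations
    {E : Type*} [AddCommGroup E] [Module ℂ E] [TopologicalSpace E]
    [IsTopologicalAddGroup E] [ContinuousSMul ℂ E] [LocallyConvexSpace ℝ E]
    [Module ℝ E] [IsScalarTower ℝ ℂ E]
    (n : ℕ) (f : Fin n → (E →ₗ[ℂ] ℂ)) (hf : LinearIndependent ℂ f)
    (G : Submodule ℂ (Fin n → ℂ))
    (hG : ∀ c : Fin n → ℂ, c ∈ G ↔ Continuous (fun x => ∑ i, c i * f i x))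
    (k : ℕ) (hk : Module.finrank ℂ G = k) :
    Module.finrank ℂ
      (E ⧸ (⨅ i, LinearMap.ker (f i)).topologicalClosure) = k :=
  codim_closure_inter_ker_eq_dim_continuous_combinations_general n f hf G hG k hk
end

section
/- If f₁,…,fₙ are completely discontinuous linear functionals on a locally convex space E, then for any vector (a₁,…,aₙ) ∈ ℂⁿ, the set of solutions x ∈ E of the finite moment problem fⱼ(x) = aⱼ for 1 ≤ j ≤ n is dense in E. -/
/-!
The evaluation map `x ↦ (f₁ x, …, fₙ x)` is onto `ℂⁿ`: a nonzero functional on `ℂⁿ` killing its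
range would produce a nontrivial combination `∑ cᵢ fᵢ` that vanishes identically, hence is
continuous. So the solution set is a translate of the joint kernel `N = ⋂ ker fᵢ`, and it suffices
that `N` is dense. Otherwise Hahn–Banach gives a nonzero continuous functional vanishing on `N`;
vanishing on the intersection of finitely many kernels, it is a combination of the `fᵢ`, which
contradicts complete discontinuity.
-/

open LinearMap Set Pointwise

def CompletelyDiscontinuous {ι 𝕜 E : Type*} [Fintype ι] [Semiring 𝕜] [TopologicalSpace 𝕜]
    [AddCommMonoid E] [Module 𝕜 E] [TopologicalSpace E] (f : ι → E →ₗ[𝕜] 𝕜) : Prop :=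
  ∀ c : ι → 𝕜, Continuous (fun x => ∑ i, c i * f i x) → c = 0

theorem LinearMap.pi_surjective_of_linearIndependent {ι K V : Type*} [Fintype ι] [Field K]
    [AddCommGroup V] [Module K V] {f : ι → V →ₗ[K] K} (hf : LinearIndependent K f) :
    Function.Surjective (LinearMap.pi f) := by
  classical
  refine dualMap_injective_iff.1 <| (injective_iff_map_eq_zero _).2 fun φ hφ => ?_
  obtain ⟨c, rfl⟩ := (LinearEquiv.piRing K K ι K).symm.surjective φ
  have hc : ∑ i, c i • f i = 0 := by
    ext x
    simpa [mul_comm] using LinearMap.congr_fun hφ x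
  rw [show c = 0 from funext (Fintype.linearIndependent_iff.1 hf c hc), map_zero]

theorem LinearMap.apply_eq_zero_of_forall_re_lt {𝕜 E : Type*} [RCLike 𝕜] [AddCommGroup E]
    [Module 𝕜 E] (g : E →ₗ[𝕜] 𝕜) {p : Submodule 𝕜 E} {u : ℝ}
    (hg : ∀ x ∈ p, RCLike.re (g x) < u) {x : E} (hx : x ∈ p) : g x = 0 := by
  by_contra hgx
  have hnorm : ‖g x‖ ^ 2 ≠ 0 := by positivity
  -- scaling `x` by a multiple of `conj (g x)` makes `re (g ·)` hit `u` exactly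
  have := hg ((((u / ‖g x‖ ^ 2 : ℝ) : 𝕜) * starRingEnd 𝕜 (g x)) • x) (p.smul_mem _ hx)
  rw [map_smul, smul_eq_mul, mul_assoc, RCLike.conj_mul, ← RCLike.ofReal_pow, ← RCLike.ofReal_mul,
    RCLike.ofReal_re, div_mul_cancel₀ _ hnorm] at this
  exact this.false

theorem Submodule.dense_of_forall_strongDual_eq_zero {𝕜 E : Type*} [RCLike 𝕜] [AddCommGroup E]
    [Module 𝕜 E] [TopologicalSpace E] [IsTopologicalAddGroup E] [ContinuousSMul 𝕜 E]
    [Module ℝ E] [IsScalarTower ℝ 𝕜 E] [LocallyConvexSpace ℝ E] {p : Submodule 𝕜 E}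
    (hp : ∀ g : StrongDual 𝕜 E, (∀ x ∈ p, g x = 0) → g = 0) : Dense (p : Set E) := by
  refine dense_iff_closure_eq.2 <| eq_univ_of_forall fun z => by_contra fun hz => ?_
  obtain ⟨g, u, hgu, hug⟩ := RCLike.geometric_hahn_banach_closed_point (𝕜 := 𝕜)
    ((p.topologicalClosure.restrictScalars ℝ).convex) isClosed_closure hz
  have hg : g = 0 := hp g fun x hx => (g : E →ₗ[𝕜] 𝕜).apply_eq_zero_of_forall_re_lt
    (p := p) (fun y hy => hgu y (p.le_topologicalClosure hy)) hx
  have := hgu 0 p.topologicalClosure.zero_mem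
  simp only [hg, _root_.zero_apply, map_zero] at this hug
  linarith

theorem CompletelyDiscontinuous.linearIndependent {ι 𝕜 E : Type*} [Fintype ι] [CommRing 𝕜]
    [TopologicalSpace 𝕜] [AddCommGroup E] [Module 𝕜 E] [TopologicalSpace E]
    {f : ι → E →ₗ[𝕜] 𝕜} (hf : CompletelyDiscontinuous f) : LinearIndependent 𝕜 f := by
  refine Fintype.linearIndependent_iff.2 fun c hc => congr_fun (hf c ?_)
  have : (fun x => ∑ i, c i * f i x) = fun _ => 0 := by
    ext x
    simpa using LinearMap.congr_fun hc x
  exact this ▸ continuous_const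

theorem CompletelyDiscontinuous.dense_ker_pi {ι 𝕜 E : Type*} [Fintype ι] [RCLike 𝕜]
    [AddCommGroup E] [Module 𝕜 E] [TopologicalSpace E] [IsTopologicalAddGroup E]
    [ContinuousSMul 𝕜 E] [Module ℝ E] [IsScalarTower ℝ 𝕜 E] [LocallyConvexSpace ℝ E]
    {f : ι → E →ₗ[𝕜] 𝕜} (hf : CompletelyDiscontinuous f) :
    Dense (ker (LinearMap.pi f) : Set E) := by
  refine Submodule.dense_of_forall_strongDual_eq_zero fun g hg => ?_
  obtain ⟨c, hc⟩ := (Submodule.mem_span_range_iff_exists_fun 𝕜).1 <|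
    mem_span_of_iInf_ker_le_ker (L := f) (K := g) fun x hx => hg x (by rwa [ker_pi])
  have hc0 : c = 0 := hf c <| by
    convert g.continuous using 1
    ext x
    simpa using LinearMap.congr_fun hc x
  ext x
  simpa [hc0] using (LinearMap.congr_fun hc x).symm

theorem LinearMap.setOf_apply_eq_eq_vadd_ker {R M M₂ : Type*} [Ring R] [AddCommGroup M]
    [AddCommGroup M₂] [Module R M] [Module R M₂] (F : M →ₗ[R] M₂) (x₀ : M) :
    {x | F x = F x₀} = x₀ +ᵥ (ker F : Set M) := by
  ext x
  simp [mem_vadd_set_iff_neg_vadd_mem, neg_add_eq_zero, eq_comm (a := F x)]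

theorem dense_solutions_finite_moment_problem_general
    {E : Type*} [AddCommGroup E] [Module ℂ E] [TopologicalSpace E]
    [IsTopologicalAddGroup E] [ContinuousSMul ℂ E] [LocallyConvexSpace ℝ E]
    (n : ℕ) (f : Fin n → (E →ₗ[ℂ] ℂ))
    (hcd : ∀ c : Fin n → ℂ, Continuous (fun x => ∑ i, c i * f i x) → c = 0)
    (a : Fin n → ℂ) :
    Dense {x : E | ∀ i, f i x = a i} := by
  have hf : CompletelyDiscontinuous f := hcd
  obtain ⟨x₀, rfl⟩ := pi_surjective_of_linearIndependent hf.linearIndependent a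
  have hsolutions :
      {x : E | ∀ i, f i x = LinearMap.pi f x₀ i} = {x | LinearMap.pi f x = LinearMap.pi f x₀} := by
    simp [funext_iff]
  rw [hsolutions, setOf_apply_eq_eq_vadd_ker]
  exact hf.dense_ker_pi.vadd x₀

theorem dense_solutions_finite_moment_problem
    {E : Type*} [AddCommGroup E] [Module ℂ E] [TopologicalSpace E]
    [IsTopologicalAddGroup E] [ContinuousSMul ℂ E] [LocallyConvexSpace ℝ E]
    [Module ℝ E] [IsScalarTower ℝ ℂ E]
    (n : ℕ) (f : Fin n → (E →ₗ[ℂ] ℂ))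
    (hcd : ∀ c : Fin n → ℂ, Continuous (fun x => ∑ i, c i * f i x) → c = 0)
    (a : Fin n → ℂ) :
    Dense {x : E | ∀ i, f i x = a i} :=
  dense_solutions_finite_moment_problem_general n f hcd a
end

section
/- Let E be a locally convex topological vector space and F a closed subspace of E of finite codimension. Linear functionals f₁,…,fₙ on E are completely discontinuous on E if and only if their restrictions to F are completely discontinuous on F. -/
/-! Each linear combination `∑ cᵢ fᵢ` is a single linear map, so it suffices that a linear map `l`
on `E` is continuous once its restriction to `F` is. A continuous projection `P : E → F` exists
since `F` is closed of finite codimension, and `l = l ∘ P + (l - l ∘ P)`, where the second summand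
vanishes on `F`, hence factors through the finite-dimensional Hausdorff quotient `E ⧸ F`. -/

namespace LinearMap

variable {𝕜 E G : Type*} [NontriviallyNormedField 𝕜] [CompleteSpace 𝕜]
  [AddCommGroup E] [Module 𝕜 E] [TopologicalSpace E] [IsTopologicalAddGroup E]
  [ContinuousSMul 𝕜 E]
  [AddCommGroup G] [Module 𝕜 G] [TopologicalSpace G] [IsTopologicalAddGroup G]
  [ContinuousSMul 𝕜 G]

theorem continuous_of_le_ker {F : Submodule 𝕜 E} (hF : IsClosed (F : Set E))
    [FiniteDimensional 𝕜 (E ⧸ F)] (r : E →ₗ[𝕜] G) (hr : F ≤ ker r) : Continuous r := by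
  have : IsClosed (F : Set E) := hF
  have hlift : Continuous (F.liftQ r hr) := continuous_of_finiteDimensional _
  exact hlift.comp continuous_quot_mk

theorem continuous_iff_continuous_comp_subtype {F : Submodule 𝕜 E} (hF : IsClosed (F : Set E))
    [FiniteDimensional 𝕜 (E ⧸ F)] (l : E →ₗ[𝕜] G) :
    Continuous l ↔ Continuous (l.comp F.subtype) := by
  refine ⟨fun hl ↦ hl.comp continuous_subtype_val, fun hlF ↦ ?_⟩
  obtain ⟨P, hP⟩ := Submodule.ClosedComplemented.of_finiteDimensional_quotient hF
  set r := l - (l.comp F.subtype).comp P.toLinearMap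
  have hr : F ≤ ker r := fun x hx ↦ by simp [r, hP ⟨x, hx⟩]
  have hl : ⇑l = ⇑r + l.comp F.subtype ∘ P := by
    ext x
    simp [r]
  rw [hl]
  exact (continuous_of_le_ker hF r hr).add (hlF.comp P.continuous)

end LinearMap

theorem completelyDiscontinuous_iff_restriction_general
    {E : Type*} [AddCommGroup E] [Module ℂ E] [TopologicalSpace E]
    [IsTopologicalAddGroup E] [ContinuousSMul ℂ E]
    (F : Submodule ℂ E) (hFc : IsClosed (F : Set E))
    (hcodim : FiniteDimensional ℂ (E ⧸ F))
    (n : ℕ) (f : Fin n → (E →ₗ[ℂ] ℂ)) :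
    (∀ c : Fin n → ℂ, Continuous (fun x => ∑ i, c i * f i x) → c = 0) ↔
      (∀ c : Fin n → ℂ,
        Continuous (fun x : F => ∑ i, c i * (f i).comp F.subtype x) → c = 0) := by
  refine forall_congr' fun c ↦ imp_congr_left ?_
  simpa [Function.comp_def, Finset.sum_fn] using
    (∑ i, c i • f i).continuous_iff_continuous_comp_subtype hFc

theorem completelyDiscontinuous_iff_restriction
    {E : Type*} [AddCommGroup E] [Module ℂ E] [TopologicalSpace E]
    [IsTopologicalAddGroup E] [ContinuousSMul ℂ E] [LocallyConvexSpace ℝ E]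
    [Module ℝ E] [IsScalarTower ℝ ℂ E]
    (F : Submodule ℂ E) (hFc : IsClosed (F : Set E))
    (hcodim : FiniteDimensional ℂ (E ⧸ F))
    (n : ℕ) (f : Fin n → (E →ₗ[ℂ] ℂ)) :
    (∀ c : Fin n → ℂ, Continuous (fun x => ∑ i, c i * f i x) → c = 0) ↔
      (∀ c : Fin n → ℂ,
        Continuous (fun x : F => ∑ i, c i * (f i).comp F.subtype x) → c = 0) :=
  completelyDiscontinuous_iff_restriction_general F hFc hcodim n f
end

section
/- Let F be non-decreasing on [1,∞), β ∈ ℝ, m ∈ ℕ, and suppose ∫₁ˣ t^β (1 - t/x)^m dF(t) = O(x^α) as x → ∞. Then ∫₁ˣ t^β dF(t) = O(x^α) as x → ∞. -/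
/-! For `t ≤ x` the weight `(1 - t / (2x))^m` is at least `2^{-m}`, so the plain integral up to `x`
is at most `2^m` times the weighted integral up to `2x`, which the hypothesis bounds by
`C (2x)^α = 2^α C x^α`. -/

open MeasureTheory Set

lemma one_le_two_pow_mul_one_sub_div_two_mul_pow {t x : ℝ} (hx : 0 < x) (ht : t ≤ x) (m : ℕ) :
    1 ≤ 2 ^ m * (1 - t / (2 * x)) ^ m := by
  rw [← mul_pow]
  refine one_le_pow₀ ?_
  have : t / x ≤ 1 := (div_le_one hx).2 ht
  have : 2 * (1 - t / (2 * x)) = 2 - t / x := by field_simp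
  linarith

lemma setIntegral_Icc_le_two_pow_mul_setIntegral_mul_one_sub_div_pow {μ : Measure ℝ} {f : ℝ → ℝ}
    {a x : ℝ} (hx : 0 < x) (hf : IntegrableOn f (Icc a (2 * x)) μ)
    (hf₀ : ∀ t ∈ Icc a (2 * x), 0 ≤ f t) (m : ℕ) :
    ∫ t in Icc a x, f t ∂μ ≤ 2 ^ m * ∫ t in Icc a (2 * x), f t * (1 - t / (2 * x)) ^ m ∂μ := by
  have hsub : Icc a x ⊆ Icc a (2 * x) := Icc_subset_Icc le_rfl (by linarith)
  have hweighted :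
      IntegrableOn (fun t => 2 ^ m * (f t * (1 - t / (2 * x)) ^ m)) (Icc a (2 * x)) μ :=
    (hf.mul_continuousOn (by fun_prop) isCompact_Icc).const_mul _
  rw [← integral_const_mul]
  calc ∫ t in Icc a x, f t ∂μ
      ≤ ∫ t in Icc a x, 2 ^ m * (f t * (1 - t / (2 * x)) ^ m) ∂μ := by
        refine setIntegral_mono_on (hf.mono_set hsub) (hweighted.mono_set hsub) measurableSet_Icc
          fun t ht => ?_
        have := one_le_two_pow_mul_one_sub_div_two_mul_pow hx ht.2 m
        nlinarith [hf₀ t (hsub ht)]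
    _ ≤ ∫ t in Icc a (2 * x), 2 ^ m * (f t * (1 - t / (2 * x)) ^ m) ∂μ := by
        refine setIntegral_mono_set hweighted ?_ hsub.eventuallyLE
        filter_upwards [ae_restrict_mem measurableSet_Icc] with t ht
        have : t / (2 * x) ≤ 1 := (div_le_one (by linarith)).2 ht.2
        have := hf₀ t ht
        positivity

lemma integrableOn_rpow_Icc {μ : Measure ℝ} [IsFiniteMeasureOnCompacts μ] {a b : ℝ} (ha : 0 < a)
    (β : ℝ) : IntegrableOn (fun t => t ^ β) (Icc a b) μ :=
  ContinuousOn.integrableOn_Icc <| continuousOn_id.rpow_const fun _ ht =>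
    Or.inl (ha.trans_le ht.1).ne'

theorem cesaro_bound_implies_bound
    (F : StieltjesFunction ℝ) (α β : ℝ) (m : ℕ) (C : ℝ)
    (hC : ∀ x ≥ (1 : ℝ),
      ∫ t in Icc 1 x, t ^ β * (1 - t / x) ^ m ∂F.measure ≤ C * x ^ α) :
    ∃ C' : ℝ, ∀ x ≥ (1 : ℝ),
      ∫ t in Icc 1 x, t ^ β ∂F.measure ≤ C' * x ^ α := by
  refine ⟨2 ^ m * 2 ^ α * C, fun x hx => ?_⟩
  have hx₀ : 0 < x := by linarith
  calc ∫ t in Icc 1 x, t ^ β ∂F.measure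
      ≤ 2 ^ m * ∫ t in Icc 1 (2 * x), t ^ β * (1 - t / (2 * x)) ^ m ∂F.measure :=
        setIntegral_Icc_le_two_pow_mul_setIntegral_mul_one_sub_div_pow hx₀
          (integrableOn_rpow_Icc one_pos β) (fun t ht => Real.rpow_nonneg (by linarith [ht.1]) β) m
    _ ≤ 2 ^ m * (C * (2 * x) ^ α) := by gcongr; exact hC (2 * x) (by linarith)
    _ = 2 ^ m * 2 ^ α * C * x ^ α := by rw [Real.mul_rpow zero_le_two hx₀.le]; ring
end
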